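/- Define d(s,t)² = 4|u|² sin²((t−s)/2) + 2(a−b)² sin²(t−s) with u ≠ 0 and a ≠ b. Then the four points at parameters 0, π/2, π, 3π/2 have equal consecutive distances but d(0,π)² = 4|u|² while 2·d(0,π/2)² = 4|u|² + 4(a−b)², so d(0,π)² ≠ 2 d(0,π/2)²; hence ([0,2π], d) admits no isometric embedding into a planar circle. -/
import Mathlib


open Real

/-- `d(s,t)² = 4|u|² sin²((t−s)/2) + 2(a−b)² sin²(t−s)`: the squared linearized Wasserstein
distance between rotations of a Gaussian with mean `u` and covariance `diag(a²,b²)`. -/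
noncomputable def dsq (u : EuclideanSpace ℝ (Fin 2)) (a b s t : ℝ) : ℝ :=
  4 * ‖u‖ ^ 2 * Real.sin ((t - s) / 2) ^ 2 + 2 * (a - b) ^ 2 * Real.sin (t - s) ^ 2

section aux

open RealInnerProductSpace

/-- In the plane, a vector orthogonal to two nonzero mutually orthogonal vectors vanishes. -/
lemma plane_orth_aux (v1 v2 w1 w2 s1 s2 : ℝ)
    (hvw : v1 * w1 + v2 * w2 = 0) (hsv : s1 * v1 + s2 * v2 = 0)
    (hsw : s1 * w1 + s2 * w2 = 0) (hv : 0 < v1 ^ 2 + v2 ^ 2) (hw : 0 < w1 ^ 2 + w2 ^ 2) :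
    s1 = 0 ∧ s2 = 0 := by
  have hlag : (v1 * w2 - v2 * w1) ^ 2 = (v1 ^ 2 + v2 ^ 2) * (w1 ^ 2 + w2 ^ 2) := by
    nlinarith [sq_nonneg (v1 * w1 + v2 * w2)]
  have hd : (v1 * w2 - v2 * w1) ≠ 0 := by
    intro h
    rw [h] at hlag
    nlinarith
  have h1 : s1 * (v1 * w2 - v2 * w1) = 0 := by linear_combination w2 * hsv - v2 * hsw
  have h2 : s2 * (v1 * w2 - v2 * w1) = 0 := by linear_combination v1 * hsw - w1 * hsv
  exact ⟨by rcases mul_eq_zero.mp h1 with h | h; exact h; exact absurd h hd,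
         by rcases mul_eq_zero.mp h2 with h | h; exact h; exact absurd h hd⟩

lemma sin_sq_quarter : Real.sin (π / 4) ^ 2 = 1 / 2 := by
  rw [Real.sin_pi_div_four, div_pow, Real.sq_sqrt] <;> norm_num

lemma sin_sq_three_quarter : Real.sin (3 * π / 4) ^ 2 = 1 / 2 := by
  rw [show (3 * π / 4 : ℝ) = π - π / 4 by ring, Real.sin_pi_sub, sin_sq_quarter]

lemma sin_sq_three_half : Real.sin (3 * π / 2) ^ 2 = 1 := by
  rw [show (3 * π / 2 : ℝ) = π + π / 2 by ring, Real.sin_add]; simp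

lemma dsq_val_half (u : EuclideanSpace ℝ (Fin 2)) (a b s t : ℝ) (h : t - s = π / 2) :
    dsq u a b s t = 2 * ‖u‖ ^ 2 + 2 * (a - b) ^ 2 := by
  rw [dsq, h, show (π / 2) / 2 = π / 4 by ring, sin_sq_quarter, Real.sin_pi_div_two]
  ring

lemma dsq_val_pi (u : EuclideanSpace ℝ (Fin 2)) (a b s t : ℝ) (h : t - s = π) :
    dsq u a b s t = 4 * ‖u‖ ^ 2 := by
  rw [dsq, h, show π / 2 = π / 2 by ring, Real.sin_pi_div_two, Real.sin_pi]
  ring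

lemma dsq_val_three_half (u : EuclideanSpace ℝ (Fin 2)) (a b s t : ℝ) (h : t - s = 3 * π / 2) :
    dsq u a b s t = 2 * ‖u‖ ^ 2 + 2 * (a - b) ^ 2 := by
  rw [dsq, h, show (3 * π / 2) / 2 = 3 * π / 4 by ring, sin_sq_three_quarter, sin_sq_three_half]
  ring

end aux

/-- For `u ≠ 0`, `a ≠ b`: the points at parameters `0, π/2, π, 3π/2` have equal consecutive
distances, `d(0,π)² = 4|u|²`, `2·d(0,π/2)² = 4|u|² + 4(a−b)²`, hence
`d(0,π)² ≠ 2 d(0,π/2)²`, and `([0,2π], d)` admits no isometric embedding into a planar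
circle. -/
theorem lot_no_circle_embedding
    (a b : ℝ) (ha : 0 < a) (hb : 0 < b) (hab : a ≠ b)
    (u : EuclideanSpace ℝ (Fin 2)) (hu : u ≠ 0) :
    (dsq u a b 0 (π / 2) = dsq u a b (π / 2) π ∧
      dsq u a b (π / 2) π = dsq u a b π (3 * π / 2) ∧
      dsq u a b π (3 * π / 2) = dsq u a b (3 * π / 2) (2 * π)) ∧
    (dsq u a b 0 π = 4 * ‖u‖ ^ 2) ∧
    (2 * dsq u a b 0 (π / 2) = 4 * ‖u‖ ^ 2 + 4 * (a - b) ^ 2) ∧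
    (dsq u a b 0 π ≠ 2 * dsq u a b 0 (π / 2)) ∧
    ¬ ∃ (r : ℝ) (γ : ℝ → EuclideanSpace ℝ (Fin 2)), 0 < r ∧
      (∀ t ∈ Set.Icc (0 : ℝ) (2 * π), ‖γ t‖ = r) ∧
      (∀ s ∈ Set.Icc (0 : ℝ) (2 * π), ∀ t ∈ Set.Icc (0 : ℝ) (2 * π),
        ‖γ s - γ t‖ ^ 2 = dsq u a b s t) := by
  have hK : 0 < (a - b) ^ 2 := by
    have : a - b ≠ 0 := sub_ne_zero.mpr hab
    positivity
  have hU : 0 < ‖u‖ ^ 2 := by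
    have : ‖u‖ ≠ 0 := norm_ne_zero_iff.mpr hu
    positivity
  set U := ‖u‖ ^ 2 with hUdef
  set K := (a - b) ^ 2 with hKdef
  have e1 : dsq u a b 0 (π / 2) = 2 * U + 2 * K := dsq_val_half u a b 0 (π / 2) (by ring)
  have e2 : dsq u a b (π / 2) π = 2 * U + 2 * K := dsq_val_half u a b (π / 2) π (by ring)
  have e3 : dsq u a b π (3 * π / 2) = 2 * U + 2 * K :=
    dsq_val_half u a b π (3 * π / 2) (by ring)
  have e4 : dsq u a b (3 * π / 2) (2 * π) = 2 * U + 2 * K :=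
    dsq_val_half u a b (3 * π / 2) (2 * π) (by ring)
  have e5 : dsq u a b 0 π = 4 * U := dsq_val_pi u a b 0 π (by ring)
  have e6 : dsq u a b (π / 2) (3 * π / 2) = 4 * U :=
    dsq_val_pi u a b (π / 2) (3 * π / 2) (by ring)
  have e7 : dsq u a b 0 (3 * π / 2) = 2 * U + 2 * K :=
    dsq_val_three_half u a b 0 (3 * π / 2) (by ring)
  refine ⟨⟨by rw [e1, e2], by rw [e2, e3], by rw [e3, e4]⟩, e5, by rw [e1]; ring,
    by rw [e1, e5]; intro h; nlinarith, ?_⟩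
  rintro ⟨r, γ, hr, hnorm, hdist⟩
  have hπ := Real.pi_pos
  have m0 : (0 : ℝ) ∈ Set.Icc (0 : ℝ) (2 * π) := ⟨le_refl _, by linarith⟩
  have m1 : π / 2 ∈ Set.Icc (0 : ℝ) (2 * π) := ⟨by linarith, by linarith⟩
  have m2 : π ∈ Set.Icc (0 : ℝ) (2 * π) := ⟨by linarith, by linarith⟩
  have m3 : 3 * π / 2 ∈ Set.Icc (0 : ℝ) (2 * π) := ⟨by linarith, by linarith⟩
  set P0 := γ 0
  set P1 := γ (π / 2)
  set P2 := γ π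
  set P3 := γ (3 * π / 2)
  -- squared norms
  have hn : ∀ x : EuclideanSpace ℝ (Fin 2), ‖x‖ = r → x 0 ^ 2 + x 1 ^ 2 = r ^ 2 := by
    intro x hx
    have : (x 0) ^ 2 + (x 1) ^ 2 = ‖x‖ ^ 2 := by
      rw [EuclideanSpace.norm_eq, Real.sq_sqrt (by positivity)]
      simp [Fin.sum_univ_two, sq_abs]
    rw [this, hx]
  have n0 := hn P0 (hnorm 0 m0)
  have n1 := hn P1 (hnorm (π / 2) m1)
  have n2 := hn P2 (hnorm π m2)
  have n3 := hn P3 (hnorm (3 * π / 2) m3)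
  -- squared distances in coordinates
  have hdcoord : ∀ x y : EuclideanSpace ℝ (Fin 2),
      ‖x - y‖ ^ 2 = (x 0 - y 0) ^ 2 + (x 1 - y 1) ^ 2 := by
    intro x y
    rw [EuclideanSpace.norm_eq, Real.sq_sqrt (by positivity)]
    simp [Fin.sum_univ_two, sq_abs]
  -- dot products between the four points
  have dot : ∀ x y : EuclideanSpace ℝ (Fin 2), ‖x‖ = r → ‖y‖ = r → ∀ c : ℝ,
      ‖x - y‖ ^ 2 = c → x 0 * y 0 + x 1 * y 1 = r ^ 2 - c / 2 := by
    intro x y hx hy c hc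
    have hx' := hn x hx
    have hy' := hn y hy
    have := hdcoord x y
    rw [hc] at this
    linear_combination (hx' + hy' + this) / 2
  have d01 : P0 0 * P1 0 + P0 1 * P1 1 = r ^ 2 - (2 * U + 2 * K) / 2 :=
    dot P0 P1 (hnorm 0 m0) (hnorm (π / 2) m1) _ (by rw [hdist 0 m0 (π / 2) m1, e1])
  have d12 : P1 0 * P2 0 + P1 1 * P2 1 = r ^ 2 - (2 * U + 2 * K) / 2 :=
    dot P1 P2 (hnorm (π / 2) m1) (hnorm π m2) _ (by rw [hdist (π / 2) m1 π m2, e2])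
  have d23 : P2 0 * P3 0 + P2 1 * P3 1 = r ^ 2 - (2 * U + 2 * K) / 2 :=
    dot P2 P3 (hnorm π m2) (hnorm (3 * π / 2) m3) _ (by rw [hdist π m2 (3 * π / 2) m3, e3])
  have d03 : P0 0 * P3 0 + P0 1 * P3 1 = r ^ 2 - (2 * U + 2 * K) / 2 :=
    dot P0 P3 (hnorm 0 m0) (hnorm (3 * π / 2) m3) _ (by rw [hdist 0 m0 (3 * π / 2) m3, e7])
  have d02 : P0 0 * P2 0 + P0 1 * P2 1 = r ^ 2 - (4 * U) / 2 :=
    dot P0 P2 (hnorm 0 m0) (hnorm π m2) _ (by rw [hdist 0 m0 π m2, e5])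
  have d13 : P1 0 * P3 0 + P1 1 * P3 1 = r ^ 2 - (4 * U) / 2 :=
    dot P1 P3 (hnorm (π / 2) m1) (hnorm (3 * π / 2) m3) _
      (by rw [hdist (π / 2) m1 (3 * π / 2) m3, e6])
  -- the rhombus argument: set diagonals v = P0 - P2, w = P1 - P3, and s = P0 + P2
  -- v ⊥ w, s ⊥ v, s ⊥ w, and v, w ≠ 0, hence s = 0
  obtain ⟨hs1, hs2⟩ := plane_orth_aux (P0 0 - P2 0) (P0 1 - P2 1) (P1 0 - P3 0) (P1 1 - P3 1)
      (P0 0 + P2 0) (P0 1 + P2 1)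
      (by linear_combination d01 - d03 - d12 + d23)
      (by linear_combination n0 - n2)
      (by linear_combination d01 - d03 + d12 - d23)
      (by
        have h4 : (P0 0 - P2 0) ^ 2 + (P0 1 - P2 1) ^ 2 = 4 * U := by
          linear_combination n0 + n2 - 2 * d02
        rw [h4]; linarith)
      (by
        have h4 : (P1 0 - P3 0) ^ 2 + (P1 1 - P3 1) ^ 2 = 4 * U := by
          linear_combination n1 + n3 - 2 * d13
        rw [h4]; linarith)
  -- so P2 = -P0 in both coordinates
  have c0 : P2 0 = -(P0 0) := by linarith
  have c1 : P2 1 = -(P0 1) := by linarith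
  -- then r² = U (from the diagonal) and the side relation forces K = 0
  rw [c0, c1] at d02 d12
  -- d02 : -(P0 0 * P0 0) - ... = r^2 - 2U, with n0 gives r^2 = U
  have hr2 : r ^ 2 = U := by linear_combination (-d02 - n0) / 2
  have hc : P0 0 * P1 0 + P0 1 * P1 1 = -(P0 0 * P1 0 + P0 1 * P1 1) := by
    linear_combination d01 - d12
  linarith [d01, hc, hr2, hK]
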